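/- For all ξ = (ξ₁,ξ₂,ξ₃), η = (η₁,η₂,η₃) ∈ ℝ³ with η ≠ 0 and 3η₁² ≠ η₂²+η₃² (so that p(η) ≠ 0), the following identity holds: ξ₁ = (A₀ + ξ₁B₀₁ + ξ₂B₀₂ + ξ₃B₀₃)·φ(ξ,η) + (A₁ + ξ₁B₁₁ + ξ₂B₁₂ + ξ₃B₁₃)·∂_{η₁}φ(ξ,η) + (A₂ + ξ₁B₂₁ + ξ₂B₂₂ + ξ₂ξ₃C₂₁ + ξ₃²C₂₂)·∂_{η₂}φ(ξ,η) + (A₃ + ξ₁B₃₁ + ξ₃B₃₂ + ξ₂ξ₃C₃₁ + ξ₂²C₃₂)·∂_{η₃}φ(ξ,η), where the coefficients are the explicit rational functions of η given in the context. -/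

import Mathlib

noncomputable section

/-- The resonance function φ(ξ,η) = ξ₁|ξ|² − (ξ₁−η₁)|ξ−η|² − η₁|η|². -/
def phiZK (ξ₁ ξ₂ ξ₃ η₁ η₂ η₃ : ℝ) : ℝ :=
  ξ₁ * (ξ₁ ^ 2 + ξ₂ ^ 2 + ξ₃ ^ 2)
    - (ξ₁ - η₁) * ((ξ₁ - η₁) ^ 2 + (ξ₂ - η₂) ^ 2 + (ξ₃ - η₃) ^ 2)
    - η₁ * (η₁ ^ 2 + η₂ ^ 2 + η₃ ^ 2)

/-- ∂_{η₁}φ = 3ξ₁²+ξ₂²+ξ₃²−6ξ₁η₁−2ξ₂η₂−2ξ₃η₃. -/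
def dphi1 (ξ₁ ξ₂ ξ₃ η₁ η₂ η₃ : ℝ) : ℝ :=
  3 * ξ₁ ^ 2 + ξ₂ ^ 2 + ξ₃ ^ 2 - 6 * ξ₁ * η₁ - 2 * ξ₂ * η₂ - 2 * ξ₃ * η₃

/-- ∂_{η₂}φ = 2ξ₁ξ₂−2ξ₁η₂−2η₁ξ₂. -/
def dphi2 (ξ₁ ξ₂ _ξ₃ η₁ η₂ _η₃ : ℝ) : ℝ :=
  2 * ξ₁ * ξ₂ - 2 * ξ₁ * η₂ - 2 * η₁ * ξ₂

/-- ∂_{η₃}φ = 2ξ₁ξ₃−2ξ₁η₃−2η₁ξ₃. -/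
def dphi3 (ξ₁ _ξ₂ ξ₃ η₁ _η₂ η₃ : ℝ) : ℝ :=
  2 * ξ₁ * ξ₃ - 2 * ξ₁ * η₃ - 2 * η₁ * ξ₃

/-- p(η) = (η₁²+η₂²+η₃²)(3η₁²−η₂²−η₃²)². -/
def pZK (η₁ η₂ η₃ : ℝ) : ℝ :=
  (η₁ ^ 2 + η₂ ^ 2 + η₃ ^ 2) * (3 * η₁ ^ 2 - η₂ ^ 2 - η₃ ^ 2) ^ 2

def A0ZK (η₁ η₂ η₃ : ℝ) : ℝ :=
  (9 * η₁ ^ 4 + 30 * η₁ ^ 2 * (η₂ ^ 2 + η₃ ^ 2) + 5 * (η₂ ^ 2 + η₃ ^ 2) ^ 2)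
    / (3 * pZK η₁ η₂ η₃)

def A1ZK (η₁ η₂ η₃ : ℝ) : ℝ :=
  -(η₁ * (9 * η₁ ^ 4 + 18 * η₁ ^ 2 * (η₂ ^ 2 + η₃ ^ 2) + (η₂ ^ 2 + η₃ ^ 2) ^ 2))
    / (3 * pZK η₁ η₂ η₃)

def A2ZK (η₁ η₂ η₃ : ℝ) : ℝ :=
  -(4 * η₂ * (η₂ ^ 2 + η₃ ^ 2) * (3 * η₁ ^ 2 + η₂ ^ 2 + η₃ ^ 2)) / (3 * pZK η₁ η₂ η₃)

def A3ZK (η₁ η₂ η₃ : ℝ) : ℝ :=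
  -(4 * η₃ * (η₂ ^ 2 + η₃ ^ 2) * (3 * η₁ ^ 2 + η₂ ^ 2 + η₃ ^ 2)) / (3 * pZK η₁ η₂ η₃)

def B01ZK (η₁ η₂ η₃ : ℝ) : ℝ := -(4 * η₁ * (η₂ ^ 2 + η₃ ^ 2)) / pZK η₁ η₂ η₃

def B02ZK (η₁ η₂ η₃ : ℝ) : ℝ :=
  -(2 * η₂ * (3 * η₁ ^ 2 + η₂ ^ 2 + η₃ ^ 2)) / (3 * pZK η₁ η₂ η₃)

def B03ZK (η₁ η₂ η₃ : ℝ) : ℝ :=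
  -(2 * η₃ * (3 * η₁ ^ 2 + η₂ ^ 2 + η₃ ^ 2)) / (3 * pZK η₁ η₂ η₃)

def B11ZK (η₁ η₂ η₃ : ℝ) : ℝ := 4 * η₁ ^ 2 * (η₂ ^ 2 + η₃ ^ 2) / pZK η₁ η₂ η₃

def B12ZK (η₁ η₂ η₃ : ℝ) : ℝ :=
  2 * η₁ * η₂ * (3 * η₁ ^ 2 + η₂ ^ 2 + η₃ ^ 2) / (3 * pZK η₁ η₂ η₃)

def B13ZK (η₁ η₂ η₃ : ℝ) : ℝ :=
  2 * η₁ * η₃ * (3 * η₁ ^ 2 + η₂ ^ 2 + η₃ ^ 2) / (3 * pZK η₁ η₂ η₃)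

def B21ZK (η₁ η₂ η₃ : ℝ) : ℝ := 4 * η₁ * η₂ * (η₂ ^ 2 + η₃ ^ 2) / pZK η₁ η₂ η₃

def B31ZK (η₁ η₂ η₃ : ℝ) : ℝ := 4 * η₁ * η₃ * (η₂ ^ 2 + η₃ ^ 2) / pZK η₁ η₂ η₃

def B22ZK (η₁ η₂ η₃ : ℝ) : ℝ :=
  2 * (η₂ ^ 2 + η₃ ^ 2) * (3 * η₁ ^ 2 + η₂ ^ 2 + η₃ ^ 2) / (3 * pZK η₁ η₂ η₃)

def B32ZK (η₁ η₂ η₃ : ℝ) : ℝ :=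
  2 * (η₂ ^ 2 + η₃ ^ 2) * (3 * η₁ ^ 2 + η₂ ^ 2 + η₃ ^ 2) / (3 * pZK η₁ η₂ η₃)

def C21ZK (η₁ η₂ η₃ : ℝ) : ℝ :=
  -(2 * η₃ * (3 * η₁ ^ 2 + η₂ ^ 2 + η₃ ^ 2)) / (3 * pZK η₁ η₂ η₃)

def C31ZK (η₁ η₂ η₃ : ℝ) : ℝ :=
  -(2 * η₂ * (3 * η₁ ^ 2 + η₂ ^ 2 + η₃ ^ 2)) / (3 * pZK η₁ η₂ η₃)

def C22ZK (η₁ η₂ η₃ : ℝ) : ℝ :=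
  2 * η₂ * (3 * η₁ ^ 2 + η₂ ^ 2 + η₃ ^ 2) / (3 * pZK η₁ η₂ η₃)

def C32ZK (η₁ η₂ η₃ : ℝ) : ℝ :=
  2 * η₃ * (3 * η₁ ^ 2 + η₂ ^ 2 + η₃ ^ 2) / (3 * pZK η₁ η₂ η₃)

/-!
All coefficients are polynomials in `η` divided by `3 p(η)`, and `p(η) ≠ 0` exactly when `η ≠ 0`
and `η` is off the cone `3η₁² = η₂² + η₃²`. Clearing this denominator turns the claim into a
polynomial identity in `ξ` and `η`.
-/

theorem pZK_ne_zero {η₁ η₂ η₃ : ℝ} (hη : ¬(η₁ = 0 ∧ η₂ = 0 ∧ η₃ = 0))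
    (hcone : 3 * η₁ ^ 2 ≠ η₂ ^ 2 + η₃ ^ 2) : pZK η₁ η₂ η₃ ≠ 0 := by
  have hnorm : η₁ ^ 2 + η₂ ^ 2 + η₃ ^ 2 ≠ 0 := by
    contrapose! hη
    refine ⟨?_, ?_, ?_⟩ <;> nlinarith [sq_nonneg η₁, sq_nonneg η₂, sq_nonneg η₃]
  have hcone' : 3 * η₁ ^ 2 - η₂ ^ 2 - η₃ ^ 2 ≠ 0 := by
    contrapose! hcone
    linarith
  exact mul_ne_zero hnorm (pow_ne_zero 2 hcone')

theorem xi1_null_structure_identity_cleared (ξ₁ ξ₂ ξ₃ η₁ η₂ η₃ : ℝ) :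
    3 * pZK η₁ η₂ η₃ * ξ₁ =
      (9 * η₁ ^ 4 + 30 * η₁ ^ 2 * (η₂ ^ 2 + η₃ ^ 2) + 5 * (η₂ ^ 2 + η₃ ^ 2) ^ 2
          - 12 * η₁ * (η₂ ^ 2 + η₃ ^ 2) * ξ₁
          - 2 * (3 * η₁ ^ 2 + η₂ ^ 2 + η₃ ^ 2) * (η₂ * ξ₂ + η₃ * ξ₃))
          * phiZK ξ₁ ξ₂ ξ₃ η₁ η₂ η₃
      + (-η₁ * (9 * η₁ ^ 4 + 18 * η₁ ^ 2 * (η₂ ^ 2 + η₃ ^ 2) + (η₂ ^ 2 + η₃ ^ 2) ^ 2)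
          + 12 * η₁ ^ 2 * (η₂ ^ 2 + η₃ ^ 2) * ξ₁
          + 2 * η₁ * (3 * η₁ ^ 2 + η₂ ^ 2 + η₃ ^ 2) * (η₂ * ξ₂ + η₃ * ξ₃))
          * dphi1 ξ₁ ξ₂ ξ₃ η₁ η₂ η₃
      + (2 * (η₂ ^ 2 + η₃ ^ 2) * (3 * η₁ ^ 2 + η₂ ^ 2 + η₃ ^ 2) * (ξ₂ - 2 * η₂)
          + 12 * η₁ * η₂ * (η₂ ^ 2 + η₃ ^ 2) * ξ₁
          + 2 * (3 * η₁ ^ 2 + η₂ ^ 2 + η₃ ^ 2) * ξ₃ * (η₂ * ξ₃ - η₃ * ξ₂))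
          * dphi2 ξ₁ ξ₂ ξ₃ η₁ η₂ η₃
      + (2 * (η₂ ^ 2 + η₃ ^ 2) * (3 * η₁ ^ 2 + η₂ ^ 2 + η₃ ^ 2) * (ξ₃ - 2 * η₃)
          + 12 * η₁ * η₃ * (η₂ ^ 2 + η₃ ^ 2) * ξ₁
          + 2 * (3 * η₁ ^ 2 + η₂ ^ 2 + η₃ ^ 2) * ξ₂ * (η₃ * ξ₂ - η₂ * ξ₃))
          * dphi3 ξ₁ ξ₂ ξ₃ η₁ η₂ η₃ := by
  simp only [pZK, phiZK, dphi1, dphi2, dphi3]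
  ring

/-- The key algebraic ("null structure") identity (Lemma `algebra`):
ξ₁ = ψ_time + ψ_space with the explicit rational coefficients. -/
theorem xi1_null_structure_identity (ξ₁ ξ₂ ξ₃ η₁ η₂ η₃ : ℝ)
    (hη : ¬(η₁ = 0 ∧ η₂ = 0 ∧ η₃ = 0))
    (hcone : 3 * η₁ ^ 2 ≠ η₂ ^ 2 + η₃ ^ 2) :
    ξ₁ =
      (A0ZK η₁ η₂ η₃ + ξ₁ * B01ZK η₁ η₂ η₃ + ξ₂ * B02ZK η₁ η₂ η₃ + ξ₃ * B03ZK η₁ η₂ η₃)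
          * phiZK ξ₁ ξ₂ ξ₃ η₁ η₂ η₃
      + (A1ZK η₁ η₂ η₃ + ξ₁ * B11ZK η₁ η₂ η₃ + ξ₂ * B12ZK η₁ η₂ η₃ + ξ₃ * B13ZK η₁ η₂ η₃)
          * dphi1 ξ₁ ξ₂ ξ₃ η₁ η₂ η₃
      + (A2ZK η₁ η₂ η₃ + ξ₁ * B21ZK η₁ η₂ η₃ + ξ₂ * B22ZK η₁ η₂ η₃
            + ξ₂ * ξ₃ * C21ZK η₁ η₂ η₃ + ξ₃ ^ 2 * C22ZK η₁ η₂ η₃)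
          * dphi2 ξ₁ ξ₂ ξ₃ η₁ η₂ η₃
      + (A3ZK η₁ η₂ η₃ + ξ₁ * B31ZK η₁ η₂ η₃ + ξ₃ * B32ZK η₁ η₂ η₃
            + ξ₂ * ξ₃ * C31ZK η₁ η₂ η₃ + ξ₂ ^ 2 * C32ZK η₁ η₂ η₃)
          * dphi3 ξ₁ ξ₂ ξ₃ η₁ η₂ η₃ := by
  have hp := pZK_ne_zero hη hcone
  simp only [A0ZK, A1ZK, A2ZK, A3ZK, B01ZK, B02ZK, B03ZK, B11ZK, B12ZK, B13ZK, B21ZK, B22ZK,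
    B31ZK, B32ZK, C21ZK, C22ZK, C31ZK, C32ZK]
  field_simp
  linear_combination xi1_null_structure_identity_cleared ξ₁ ξ₂ ξ₃ η₁ η₂ η₃
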